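/- arXiv:1609.00961 — 3 statements merged into one kernel-verified Lean document; each statement's English description precedes it below -/
import Mathlib

section
/- Let d₁,…,d_s ≥ 0 be integers and let f(α₁,…,α_s) = Σ_{(x⃗₁,…,x⃗_s)∈𝐗⁽ˢ⁾} a(x⃗₁,…,x⃗_s) α₁(x⃗₁)⋯α_s(x⃗_s) have symmetric coefficient system a with ‖f‖_w < ∞, and suppose a(x⃗₁,…,x⃗_s) = 0 unless n(x⃗_i) ≥ d_i for every 1 ≤ i ≤ s (i.e. f is of degree at least d_i in the field α_i). Let p₁,…,p_s ∈ (0,∞] satisfy Σ_{j=1}^s d_j/p_j = 1. Then for all fields α₁,…,α_s with |α_j(x)| ≤ κ_j for all x ∈ X and 1 ≤ j ≤ s, one has |f(α₁,…,α_s)| ≤ ‖f‖_w · Π_{j=1}^s (κ_j^{-1}‖α_j‖_{p_j})^{d_j}, where ‖α‖_p = (Σ_{x∈X}|α(x)|^p)^{1/p} for p < ∞ and ‖α‖_∞ = max_{x∈X}|α(x)|. -/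
open scoped BigOperators ENNReal Classical

namespace BFKT

noncomputable section

variable {X : Type*}

/-- Tuples of points of `X` with prescribed multi-length `n`. -/
abbrev Tup (X : Type*) {s : ℕ} (n : Fin s → ℕ) := (j : Fin s) → Fin (n j) → X

/-- Pass from a tuple to the associated family of lists. -/
def toLists {s : ℕ} {n : Fin s → ℕ} (v : Tup X n) : Fin s → List X :=
  fun j => List.ofFn (v j)

/-- The set of points of `X` occurring in one of the lists. -/
def supp [DecidableEq X] {s : ℕ} (l : Fin s → List X) : Finset X :=
  Finset.univ.biUnion fun j => (l j).toFinset

/-- The weight system with tree-weight `G` and constant weight factors `κ`. -/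
def wt [DecidableEq X] (G : Finset X → ℝ) {s : ℕ} (κ : Fin s → ℝ) (l : Fin s → List X) : ℝ :=
  (∏ j, κ j ^ (l j).length) * G (supp l)

/-- A coefficient system is symmetric if it is invariant under permutation of the
components of each of its list arguments. -/
def IsSymm {s : ℕ} (a : (Fin s → List X) → ℂ) : Prop :=
  ∀ (l : Fin s → List X) (j : Fin s) (l' : List X),
    (l j).Perm l' → a (Function.update l j l') = a l

/-- The norm `‖f‖_w` of an analytic function with (symmetric) coefficient system `a`. -/
def coefNorm [Fintype X] [DecidableEq X] (G : Finset X → ℝ) {s : ℕ}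
    (κ : Fin s → ℝ) (a : (Fin s → List X) → ℂ) : ℝ≥0∞ :=
  ENNReal.ofReal (‖a fun _ => []‖) +
  ∑' n : Fin s → ℕ,
    if 1 ≤ ∑ j, n j then
      ⨆ (x : X) (j : Fin s) (_ : n j ≠ 0) (i : Fin (n j)),
        ∑ v : Tup X n,
          if v j i = x then
            ENNReal.ofReal (‖a (toLists v)‖ * wt G κ (toLists v))
          else 0
    else 0

/-- `A` is an `s`-field map kernel: it vanishes on the empty tuple. -/
def IsKernel {s : ℕ} (A : X → (Fin s → List X) → ℂ) : Prop :=
  ∀ x, A x (fun _ => []) = 0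

/-- The `L` part of the field map kernel norm. -/
def kerL [Fintype X] [DecidableEq X] (G : Finset X → ℝ) {s : ℕ} (κ : Fin s → ℝ)
    (A : X → (Fin s → List X) → ℂ) (n : Fin s → ℕ) : ℝ≥0∞ :=
  ⨆ x : X, ∑ v : Tup X n,
    ENNReal.ofReal (‖A x (toLists v)‖ * (∏ j, κ j ^ n j)
      * G (insert x (supp (toLists v))))

/-- The `R` part of the field map kernel norm. -/
def kerR [Fintype X] [DecidableEq X] (G : Finset X → ℝ) {s : ℕ} (κ : Fin s → ℝ)
    (A : X → (Fin s → List X) → ℂ) (n : Fin s → ℕ) : ℝ≥0∞ :=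
  ⨆ (x' : X) (j : Fin s) (_ : n j ≠ 0) (i : Fin (n j)),
    ∑ x : X, ∑ v : Tup X n,
      if v j i = x' then
        ENNReal.ofReal (‖A x (toLists v)‖ * (∏ j', κ j' ^ n j')
          * G (insert x (supp (toLists v))))
      else 0

/-- The norm `⦀A⦀_w` of an `s`-field map kernel. -/
def kerNorm [Fintype X] [DecidableEq X] (G : Finset X → ℝ) {s : ℕ} (κ : Fin s → ℝ)
    (A : X → (Fin s → List X) → ℂ) : ℝ≥0∞ :=
  ∑' n : Fin s → ℕ, if 1 ≤ ∑ j, n j then max (kerL G κ A n) (kerR G κ A n) else 0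

/-- The field obtained by applying the field map with kernel `A` to the fields `α`. -/
def fmApply [Fintype X] {s : ℕ} (A : X → (Fin s → List X) → ℂ)
    (α : Fin s → X → ℂ) (x : X) : ℂ :=
  ∑' p : Σ n : Fin s → ℕ, Tup X n, A x (toLists p.2) * ∏ j, ∏ i, α j (p.2 j i)

/-- The value of the analytic function with coefficient system `a` at the fields `α`. -/
def fnApply [Fintype X] {s : ℕ} (a : (Fin s → List X) → ℂ)
    (α : Fin s → X → ℂ) : ℂ :=
  ∑' p : Σ n : Fin s → ℕ, Tup X n, a (toLists p.2) * ∏ j, ∏ i, α j (p.2 j i)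

/-- The `L^p` norm (for `0 < p ≤ ∞`) of a field on the finite set `X`. -/
def lpNorm [Fintype X] (p : ℝ≥0∞) (α : X → ℂ) : ℝ :=
  if p = ∞ then ⨆ x, ‖α x‖
  else (∑ x, ‖α x‖ ^ p.toReal) ^ (1 / p.toReal)

/-- Symmetrization of a coefficient system. -/
def symmetrize {s : ℕ} (a : (Fin s → List X) → ℂ) : (Fin s → List X) → ℂ :=
  fun l =>
    (((∏ j, Nat.factorial (l j).length : ℕ) : ℂ))⁻¹ *
      ∑ e : (j : Fin s) → Equiv.Perm (Fin (l j).length),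
        a fun j => List.ofFn fun i => (l j).get (e j i)

/-- Ordered concatenation of the pieces `q (j,k)`, in lexicographic order of `(j,k)`. -/
def concatPieces {r : ℕ} (m : Fin r → ℕ) (q : (Σ j : Fin r, Fin (m j)) → List X) : List X :=
  ((List.finRange r).map fun j => (List.ofFn fun k : Fin (m j) => q ⟨j, k⟩).flatten).flatten

/-- The coefficient system obtained by formally substituting the field map kernels `A j`
into the coefficient system `a` of a function of `r` fields. -/
def substCoef [Fintype X] {r s : ℕ} (a : (Fin r → List X) → ℂ)
    (A : Fin r → X → (Fin s → List X) → ℂ) : (Fin s → List X) → ℂ :=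
  fun l =>
    ∑' m : Fin r → ℕ,
      ∑ y : Tup X m,
        a (toLists y) *
          ∑' q : (i : Fin s) → (Σ j : Fin r, Fin (m j)) → List X,
            if ∀ i, concatPieces m (q i) = l i then
              ∏ j, ∏ k, A j (y j k) (fun i => q i ⟨j, k⟩)
            else 0

/-- The kernel obtained by formally substituting the field map kernels `A j`
into the `r`-field map kernel `B`. -/
def substKer [Fintype X] {r s : ℕ} (B : X → (Fin r → List X) → ℂ)
    (A : Fin r → X → (Fin s → List X) → ℂ) : X → (Fin s → List X) → ℂ :=
  fun x l => substCoef (B x) A l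

/-- Total length of the last `r` list arguments of an `(s+r)`-field map kernel argument. -/
def lastLen {X : Type*} {s r : ℕ} (l : Fin (s + r) → List X) : ℕ :=
  ∑ j : Fin r, (l (Fin.natAdd s j)).length

/-- `B` has minimum degree at least `d` in its last `r` arguments. -/
def MinDeg {s r : ℕ} (B : X → (Fin (s + r) → List X) → ℂ) (d : ℕ) : Prop :=
  ∀ x l, lastLen (s := s) (r := r) l < d → B x l = 0

/-- `B` has maximum degree at most `d` in its last `r` arguments. -/
def MaxDeg {s r : ℕ} (B : X → (Fin (s + r) → List X) → ℂ) (d : ℕ) : Prop :=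
  ∀ x l, d < lastLen (s := s) (r := r) l → B x l = 0

/-- The restriction `B_{n_{s+1},…,n_{s+r}}`. -/
def restrictDeg {s r : ℕ} (B : X → (Fin (s + r) → List X) → ℂ) (n : Fin r → ℕ) :
    X → (Fin (s + r) → List X) → ℂ :=
  fun x l => if ∀ j, (l (Fin.natAdd s j)).length = n j then B x l else 0

/-- The primed norm `⦀B⦀'_{w_{κ,λ}}`. -/
def kerNorm' [Fintype X] [DecidableEq X] (G : Finset X → ℝ) {s r : ℕ}
    (kl : Fin (s + r) → ℝ) (B : X → (Fin (s + r) → List X) → ℂ) : ℝ≥0∞ :=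
  ∑' n : Fin r → ℕ, (∑ j, n j : ℕ) * kerNorm G kl (restrictDeg B n)

/-- The norm of an `r`-tuple of `s`-field maps, as element of the Banach space `𝓑`. -/
def tupleNorm [Fintype X] [DecidableEq X] (G : Finset X → ℝ) {s r : ℕ}
    (κ : Fin s → ℝ) (lam : Fin r → ℝ)
    (Γ : Fin r → X → (Fin s → List X) → ℂ) : ℝ≥0∞ :=
  ⨆ j, kerNorm G κ (Γ j) / ENNReal.ofReal (lam j)

/-- The kernel of the coordinate field map `(α₁,…,α_s) ↦ α_i`. -/
def projKer [DecidableEq X] {s : ℕ} (i : Fin s) : X → (Fin s → List X) → ℂ :=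
  fun x l => if l = Function.update (fun _ => ([] : List X)) i [x] then 1 else 0

/-- The family of maps substituted into an `(s+r)`-field map when composing with
an `r`-tuple `Γ` of `s`-field maps: the first `s` arguments are left alone. -/
def extendMaps [DecidableEq X] {s r : ℕ}
    (Γ : Fin r → X → (Fin s → List X) → ℂ) :
    Fin (s + r) → X → (Fin s → List X) → ℂ :=
  Fin.addCases (fun i => projKer i) Γ

/-- The kernel of the `s`-field map `B̃(Γ⃗)(α⃗) = B(α⃗, Γ⃗(α⃗))`. -/
def tildeKer [Fintype X] [DecidableEq X] {s r : ℕ}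
    (B : X → (Fin (s + r) → List X) → ℂ)
    (Γ : Fin r → X → (Fin s → List X) → ℂ) : X → (Fin s → List X) → ℂ :=
  substKer B (extendMaps Γ)

end

/-!
Split `f` by multidegree `n`; only `n ≥ d` contributes. In such a degree, bound all but the
first `d j` factors `|α j (x)|` of each monomial by `κ j`: the resulting `∏ κ j ^ n j` is
absorbed into the weight since `G ≥ 1`, and the monomial becomes `F v * ∏ t β t (v t)` with
`F = |a| w`, `β j = |α j| / κ j` and `t` running over the `∑ d j` kept slots. As
`∑_t 1 / p t = 1`, Hölder's inequality over tuples, weighted by `F`, bounds the degree-`n` sum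
by `∏_t ‖β t‖_{p t}` times the largest sum of `F` over the tuples with a prescribed point in
one slot, which is the degree-`n` part of `‖f‖_w`. Summing over `n` gives the claim.
-/

open Finset

section LpNorm

variable {Y : Type*} [Fintype Y]

noncomputable def enLpNorm (p : ℝ≥0∞) (β : Y → ℝ≥0∞) : ℝ≥0∞ :=
  if p = ∞ then ⨆ y, β y else (∑ y, β y ^ p.toReal) ^ (1 / p.toReal)

lemma lpNorm_nonneg (p : ℝ≥0∞) (α : Y → ℂ) : 0 ≤ lpNorm p α := by
  unfold lpNorm
  split
  · exact Real.iSup_nonneg fun _ => norm_nonneg _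
  · exact Real.rpow_nonneg (sum_nonneg fun _ _ => Real.rpow_nonneg (norm_nonneg _) _) _

lemma enLpNorm_le_ofReal_lpNorm_div {p : ℝ≥0∞} (hp : p ≠ 0) {κ : ℝ} (hκ : 0 < κ)
    (α : Y → ℂ) :
    enLpNorm p (fun y => ENNReal.ofReal (‖α y‖ / κ)) ≤ ENNReal.ofReal (lpNorm p α / κ) := by
  unfold enLpNorm lpNorm
  by_cases htop : p = ∞
  · simp only [if_pos htop]
    exact iSup_le fun y => ENNReal.ofReal_le_ofReal <|
      div_le_div_of_nonneg_right
        (le_ciSup (f := fun y => ‖α y‖) (Finite.bddAbove_range _) y) hκ.le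
  · simp only [if_neg htop]
    have hp' : 0 < p.toReal := ENNReal.toReal_pos hp htop
    have hnn : ∀ y, 0 ≤ ‖α y‖ / κ := fun y => div_nonneg (norm_nonneg _) hκ.le
    simp only [ENNReal.ofReal_rpow_of_nonneg (hnn _) hp'.le]
    rw [← ENNReal.ofReal_sum_of_nonneg fun y _ => Real.rpow_nonneg (hnn y) _,
      ENNReal.ofReal_rpow_of_nonneg (sum_nonneg fun y _ => Real.rpow_nonneg (hnn y) _)
        (by positivity)]
    refine le_of_eq (congrArg _ ?_)
    simp only [Real.div_rpow (norm_nonneg _) hκ.le]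
    rw [← sum_div, Real.div_rpow (sum_nonneg fun _ _ => Real.rpow_nonneg (norm_nonneg _) _)
      (Real.rpow_nonneg hκ.le _), ← Real.rpow_mul hκ.le, mul_one_div_cancel hp'.ne',
      Real.rpow_one]

end LpNorm

section Holder

variable {V Y T : Type*} [Fintype V] [Fintype Y] [DecidableEq Y]

lemma sum_mul_comp_le_of_fiber_sum_le (c : V → Y) (F : V → ℝ≥0∞) (g : Y → ℝ≥0∞)
    {M : ℝ≥0∞} (hM : ∀ y, ∑ v with c v = y, F v ≤ M) :
    ∑ v, F v * g (c v) ≤ M * ∑ y, g y := by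
  calc ∑ v, F v * g (c v)
      = ∑ y, (∑ v with c v = y, F v) * g y := by
        rw [← sum_fiberwise univ c]
        refine sum_congr rfl fun y _ => ?_
        rw [sum_mul]
        exact sum_congr rfl fun v hv => by rw [(mem_filter.1 hv).2]
    _ ≤ ∑ y, M * g y := by gcongr with y; exact hM y
    _ = M * ∑ y, g y := (mul_sum _ _ _).symm

lemma prod_rpow_eq_rpow_sum (a : ℝ≥0∞) (s : Finset T) {σ : T → ℝ}
    (hσ : ∀ t ∈ s, 0 ≤ σ t) : ∏ t ∈ s, a ^ σ t = a ^ ∑ t ∈ s, σ t := by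
  classical
  induction s using Finset.induction_on with
  | empty => simp
  | insert t s ht ih =>
    rw [prod_insert ht, sum_insert ht, ih fun u hu => hσ u (mem_insert_of_mem hu),
      ENNReal.rpow_add_of_nonneg _ _ (hσ t (mem_insert_self t s))
        (sum_nonneg fun u hu => hσ u (mem_insert_of_mem hu))]

lemma sum_mul_prod_rpow_le (s : Finset T) (c : T → V → Y) (F : V → ℝ≥0∞)
    (γ : T → Y → ℝ≥0∞) {σ : T → ℝ} (hσ0 : ∀ t ∈ s, 0 ≤ σ t) (hσ1 : ∑ t ∈ s, σ t = 1)
    {M : ℝ≥0∞} (hM : ∀ t ∈ s, ∀ y, ∑ v with c t v = y, F v ≤ M) :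
    ∑ v, F v * ∏ t ∈ s, γ t (c t v) ^ σ t ≤ M * ∏ t ∈ s, (∑ y, γ t y) ^ σ t := by
  have pull_out : ∀ (A : ℝ≥0∞) (B : T → ℝ≥0∞),
      ∏ t ∈ s, (A * B t) ^ σ t = A * ∏ t ∈ s, B t ^ σ t := fun A B => by
    rw [prod_congr rfl fun t ht => ENNReal.mul_rpow_of_nonneg _ _ (hσ0 t ht),
      prod_mul_distrib, prod_rpow_eq_rpow_sum A s hσ0, hσ1, ENNReal.rpow_one]
  let _ : MeasurableSpace V := ⊤
  have holder := ENNReal.lintegral_prod_norm_pow_le (μ := MeasureTheory.Measure.count) s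
    (f := fun t v => F v * γ t (c t v)) (fun _ _ => Measurable.aemeasurable fun _ _ => trivial)
    hσ1 hσ0
  simp only [MeasureTheory.lintegral_count, tsum_fintype] at holder
  calc ∑ v, F v * ∏ t ∈ s, γ t (c t v) ^ σ t
      = ∑ v, ∏ t ∈ s, (F v * γ t (c t v)) ^ σ t := by simp only [pull_out]
    _ ≤ ∏ t ∈ s, (∑ v, F v * γ t (c t v)) ^ σ t := holder
    _ ≤ ∏ t ∈ s, (M * ∑ y, γ t y) ^ σ t := by
        refine prod_le_prod' fun t ht => ENNReal.rpow_le_rpow ?_ (hσ0 t ht)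
        exact sum_mul_comp_le_of_fiber_sum_le _ _ _ (hM t ht)
    _ = M * ∏ t ∈ s, (∑ y, γ t y) ^ σ t := pull_out M _

variable [Fintype T]

lemma sum_mul_prod_le_mul_prod_enLpNorm (c : T → V → Y) (F : V → ℝ≥0∞)
    (β : T → Y → ℝ≥0∞) {p : T → ℝ≥0∞} (hsum : ∑ t, 1 / p t = 1)
    {M : ℝ≥0∞} (hM : ∀ t y, ∑ v with c t v = y, F v ≤ M) :
    ∑ v, F v * ∏ t, β t (c t v) ≤ M * ∏ t, enLpNorm (p t) (β t) := by
  set s : Finset T := {t | p t ≠ ∞}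
  have hp0 : ∀ t, p t ≠ 0 := fun t ht => by
    have h := single_le_sum (f := fun t => 1 / p t) (fun _ _ => zero_le) (mem_univ t)
    rw [hsum, ht] at h
    simp at h
  have hs : ∑ t ∈ s, 1 / p t = 1 := (sum_filter_of_ne fun t _ h => by simpa using h).trans hsum
  have hσ1 : ∑ t ∈ s, 1 / (p t).toReal = 1 := by
    calc ∑ t ∈ s, 1 / (p t).toReal = (∑ t ∈ s, 1 / p t).toReal := by
          rw [ENNReal.toReal_sum fun t _ => by simp [hp0 t]]
          simp only [ENNReal.toReal_div, ENNReal.toReal_one]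
      _ = 1 := by rw [hs, ENNReal.toReal_one]
  have hroot : ∀ v, ∏ t ∈ s, β t (c t v)
      = ∏ t ∈ s, (β t (c t v) ^ (p t).toReal) ^ (1 / (p t).toReal) := fun v =>
    prod_congr rfl fun t ht => by
      rw [one_div, ENNReal.rpow_rpow_inv (ENNReal.toReal_ne_zero.2 ⟨hp0 t, (mem_filter.1 ht).2⟩)]
  calc ∑ v, F v * ∏ t, β t (c t v)
      ≤ ∑ v, F v * ((∏ t ∈ s, β t (c t v)) * ∏ t ∈ sᶜ, ⨆ y, β t y) := by
        gcongr with v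
        rw [← prod_mul_prod_compl s]
        gcongr
        exact le_iSup _ _
    _ = (∑ v, F v * ∏ t ∈ s, (β t (c t v) ^ (p t).toReal) ^ (1 / (p t).toReal))
          * ∏ t ∈ sᶜ, ⨆ y, β t y := by
        simp only [hroot, sum_mul, mul_assoc]
    _ ≤ (M * ∏ t ∈ s, (∑ y, β t y ^ (p t).toReal) ^ (1 / (p t).toReal))
          * ∏ t ∈ sᶜ, ⨆ y, β t y := by
        gcongr
        exact sum_mul_prod_rpow_le s c F _ (fun _ _ => by positivity) hσ1 fun t _ => hM t
    _ = M * ∏ t, enLpNorm (p t) (β t) := by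
        rw [mul_assoc, ← prod_mul_prod_compl s fun t => enLpNorm (p t) (β t)]
        congr 2
        · exact prod_congr rfl fun t ht => by simp [enLpNorm, (mem_filter.1 ht).2]
        · exact prod_congr rfl fun t ht => by simp_all [enLpNorm, s]

end Holder

lemma prod_le_prod_castLE {M : Type*} [CommMonoid M] [Preorder M] [MulLeftMono M] {n d : ℕ}
    (h : d ≤ n) {g : Fin n → M} (hg : ∀ i, g i ≤ 1) :
    ∏ i, g i ≤ ∏ i : Fin d, g (Fin.castLE h i) := by
  calc ∏ i, g i ≤ ∏ i ∈ univ.map (Fin.castLEEmb h), g i :=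
        prod_le_prod_of_subset_of_le_one' (subset_univ _) fun i _ _ => hg i
    _ = ∏ i : Fin d, g (Fin.castLE h i) := prod_map _ _ _

lemma prod_enorm_le_pow_mul_prod_castLE {X : Type*} {β : X → ℂ} {c : ℝ} (hc : 0 < c)
    (hβ : ∀ x, ‖β x‖ ≤ c) {n d : ℕ} (h : d ≤ n) (v : Fin n → X) :
    ∏ i, ‖β (v i)‖ₑ
      ≤ ENNReal.ofReal c ^ n * ∏ i : Fin d, ENNReal.ofReal (‖β (v (Fin.castLE h i))‖ / c) := by
  have hsplit : ∀ x, ‖β x‖ₑ = ENNReal.ofReal c * ENNReal.ofReal (‖β x‖ / c) := fun x => by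
    rw [← ENNReal.ofReal_mul hc.le, mul_div_cancel₀ _ hc.ne', ofReal_norm]
  simp only [hsplit, prod_mul_distrib, prod_const, card_univ, Fintype.card_fin]
  gcongr
  exact prod_le_prod_castLE h fun i => ENNReal.ofReal_le_one.2 ((div_le_one hc).2 (hβ _))

lemma sum_sigma_one_div {ι : Type*} [Fintype ι] (d : ι → ℕ) (p : ι → ℝ≥0∞) :
    ∑ t : Σ j, Fin (d j), 1 / p t.1 = ∑ j, (d j : ℝ≥0∞) / p j := by
  simp only [Fintype.sum_sigma, sum_const, card_univ, Fintype.card_fin, nsmul_eq_mul,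
    mul_one_div]

section Fields

variable {X : Type*} [DecidableEq X] {s : ℕ} {G : Finset X → ℝ} {κ : Fin s → ℝ}
  {a : (Fin s → List X) → ℂ} {α : Fin s → X → ℂ}

lemma prod_pow_length_le_wt (hG1 : ∀ S, 1 ≤ G S) (hκ : ∀ j, 0 ≤ κ j) (l : Fin s → List X) :
    ∏ j, κ j ^ (l j).length ≤ wt G κ l :=
  le_mul_of_one_le_right (prod_nonneg fun j _ => pow_nonneg (hκ j) _) (hG1 _)

lemma enorm_coef_mul_prod_le (hG1 : ∀ S, 1 ≤ G S) (hκ : ∀ j, 0 < κ j)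
    (hα : ∀ j x, ‖α j x‖ ≤ κ j) {n d : Fin s → ℕ} (hdn : ∀ j, d j ≤ n j) (v : Tup X n) :
    ‖a (toLists v) * ∏ j, ∏ i, α j (v j i)‖ₑ
      ≤ ENNReal.ofReal (‖a (toLists v)‖ * wt G κ (toLists v))
        * ∏ t : Σ j, Fin (d j),
            ENNReal.ofReal (‖α t.1 (v t.1 (Fin.castLE (hdn t.1) t.2))‖ / κ t.1) := by
  have hwt : ∏ j, κ j ^ n j ≤ wt G κ (toLists v) := by
    simpa only [toLists, List.length_ofFn] using
      prod_pow_length_le_wt hG1 (fun j => (hκ j).le) (toLists v)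
  calc ‖a (toLists v) * ∏ j, ∏ i, α j (v j i)‖ₑ
      = ‖a (toLists v)‖ₑ * ∏ j, ∏ i, ‖α j (v j i)‖ₑ := by
        simp only [enorm_eq_nnnorm, nnnorm_mul, nnnorm_prod, ENNReal.coe_mul,
          ENNReal.ofNNReal_finsetProd]
    _ ≤ ‖a (toLists v)‖ₑ * ∏ j, (ENNReal.ofReal (κ j) ^ n j * ∏ i : Fin (d j),
          ENNReal.ofReal (‖α j (v j (Fin.castLE (hdn j) i))‖ / κ j)) := by
        gcongr with j
        exact prod_enorm_le_pow_mul_prod_castLE (hκ j) (hα j) (hdn j) (v j)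
    _ = ‖a (toLists v)‖ₑ * ENNReal.ofReal (∏ j, κ j ^ n j) * ∏ t : Σ j, Fin (d j),
          ENNReal.ofReal (‖α t.1 (v t.1 (Fin.castLE (hdn t.1) t.2))‖ / κ t.1) := by
        rw [prod_mul_distrib, Fintype.prod_sigma, mul_assoc,
          ENNReal.ofReal_prod_of_nonneg fun j _ => pow_nonneg (hκ j).le _]
        simp only [ENNReal.ofReal_pow (hκ _).le]
    _ ≤ _ := by
        rw [ENNReal.ofReal_mul (norm_nonneg _), ofReal_norm]
        gcongr

variable [Fintype X]

noncomputable def coefNormDeg (G : Finset X → ℝ) (κ : Fin s → ℝ) (a : (Fin s → List X) → ℂ)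
    (n : Fin s → ℕ) : ℝ≥0∞ :=
  ⨆ (x : X) (j : Fin s) (_ : n j ≠ 0) (i : Fin (n j)),
    ∑ v : Tup X n,
      if v j i = x then ENNReal.ofReal (‖a (toLists v)‖ * wt G κ (toLists v)) else 0

lemma fiber_sum_le_coefNormDeg {n : Fin s → ℕ} (j : Fin s) (i : Fin (n j)) (x : X) :
    ∑ v : Tup X n with v j i = x, ENNReal.ofReal (‖a (toLists v)‖ * wt G κ (toLists v))
      ≤ coefNormDeg G κ a n := by
  rw [sum_filter]
  exact le_iSup_of_le x <| le_iSup_of_le j <| le_iSup_of_le i.pos.ne' <| le_iSup_of_le i le_rfl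

variable {d : Fin s → ℕ} {p : Fin s → ℝ≥0∞}

lemma sum_enorm_coef_mul_prod_le (hG1 : ∀ S, 1 ≤ G S) (hκ : ∀ j, 0 < κ j)
    (hα : ∀ j x, ‖α j x‖ ≤ κ j)
    (hdeg : ∀ l : Fin s → List X, (∃ j, (l j).length < d j) → a l = 0)
    (hp : ∀ j, 0 < p j) (hsum : ∑ j, (d j : ℝ≥0∞) / p j = 1) (n : Fin s → ℕ) :
    ∑ v : Tup X n, ‖a (toLists v) * ∏ j, ∏ i, α j (v j i)‖ₑ
      ≤ (if 1 ≤ ∑ j, n j then coefNormDeg G κ a n else 0)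
        * ∏ j, ENNReal.ofReal (lpNorm (p j) (α j) / κ j) ^ d j := by
  by_cases hlow : ∃ j, n j < d j
  · obtain ⟨j, hj⟩ := hlow
    have hzero : ∀ v : Tup X n, a (toLists v) = 0 := fun v =>
      hdeg _ ⟨j, by simpa [toLists] using hj⟩
    simp [hzero]
  have hdn : ∀ j, d j ≤ n j := fun j => not_lt.1 fun h => hlow ⟨j, h⟩
  obtain ⟨j₀, hj₀⟩ : ∃ j, d j ≠ 0 := by
    by_contra! h
    simp [h] at hsum
  have hn : 1 ≤ ∑ j, n j := (Nat.one_le_iff_ne_zero.2 hj₀).trans <|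
    (hdn j₀).trans (single_le_sum (fun j _ => Nat.zero_le _) (mem_univ j₀))
  rw [if_pos hn]
  calc ∑ v : Tup X n, ‖a (toLists v) * ∏ j, ∏ i, α j (v j i)‖ₑ
      ≤ ∑ v : Tup X n, ENNReal.ofReal (‖a (toLists v)‖ * wt G κ (toLists v))
          * ∏ t : Σ j, Fin (d j),
              ENNReal.ofReal (‖α t.1 (v t.1 (Fin.castLE (hdn t.1) t.2))‖ / κ t.1) :=
        sum_le_sum fun v _ => enorm_coef_mul_prod_le hG1 hκ hα hdn v
    _ ≤ coefNormDeg G κ a n * ∏ t : Σ j, Fin (d j),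
          enLpNorm (p t.1) fun x => ENNReal.ofReal (‖α t.1 x‖ / κ t.1) :=
        -- elaborated before unifying with the goal: the other way round is very slow
        (sum_mul_prod_le_mul_prod_enLpNorm _ _
          (fun t x => ENNReal.ofReal (‖α t.1 x‖ / κ t.1)) ((sum_sigma_one_div d p).trans hsum)
          fun t x => fiber_sum_le_coefNormDeg _ _ x :)
    _ ≤ coefNormDeg G κ a n * ∏ t : Σ j, Fin (d j),
          ENNReal.ofReal (lpNorm (p t.1) (α t.1) / κ t.1) := by
        gcongr with t
        exact enLpNorm_le_ofReal_lpNorm_div (hp t.1).ne' (hκ t.1) _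
    _ = coefNormDeg G κ a n * ∏ j, ENNReal.ofReal (lpNorm (p j) (α j) / κ j) ^ d j := by
        simp [Fintype.prod_sigma]

lemma tsum_enorm_coef_mul_prod_le (hG1 : ∀ S, 1 ≤ G S) (hκ : ∀ j, 0 < κ j)
    (hα : ∀ j x, ‖α j x‖ ≤ κ j)
    (hdeg : ∀ l : Fin s → List X, (∃ j, (l j).length < d j) → a l = 0)
    (hp : ∀ j, 0 < p j) (hsum : ∑ j, (d j : ℝ≥0∞) / p j = 1) :
    ∑' q : Σ n : Fin s → ℕ, Tup X n, ‖a (toLists q.2) * ∏ j, ∏ i, α j (q.2 j i)‖ₑ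
      ≤ coefNorm G κ a * ∏ j, ENNReal.ofReal (lpNorm (p j) (α j) / κ j) ^ d j := by
  rw [ENNReal.tsum_sigma']
  simp only [tsum_fintype]
  calc _ ≤ ∑' n : Fin s → ℕ, (if 1 ≤ ∑ j, n j then coefNormDeg G κ a n else 0)
          * ∏ j, ENNReal.ofReal (lpNorm (p j) (α j) / κ j) ^ d j :=
        ENNReal.tsum_le_tsum fun n => sum_enorm_coef_mul_prod_le hG1 hκ hα hdeg hp hsum n
    _ ≤ _ := by
        rw [ENNReal.tsum_mul_right]
        gcongr
        exact le_add_self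

end Fields

theorem statement0_general {X : Type*} [Fintype X] [DecidableEq X] {s : ℕ}
    (G : Finset X → ℝ)
    (hG1 : ∀ S : Finset X, 1 ≤ G S)
    (κ : Fin s → ℝ) (hκ : ∀ j, 0 < κ j)
    (d : Fin s → ℕ)
    (a : (Fin s → List X) → ℂ)
    (hfin : coefNorm G κ a < ⊤)
    (hdeg : ∀ l : Fin s → List X, (∃ j, (l j).length < d j) → a l = 0)
    (p : Fin s → ℝ≥0∞) (hp : ∀ j, 0 < p j)
    (hsum : ∑ j, (d j : ℝ≥0∞) / p j = 1)
    (α : Fin s → X → ℂ) (hα : ∀ j x, ‖α j x‖ ≤ κ j) :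
    ‖fnApply a α‖
      ≤ (coefNorm G κ a).toReal * ∏ j, (lpNorm (p j) (α j) / κ j) ^ d j := by
  have hC : ∏ j, ENNReal.ofReal (lpNorm (p j) (α j) / κ j) ^ d j ≠ ∞ :=
    ENNReal.prod_ne_top fun j _ => ENNReal.pow_ne_top ENNReal.ofReal_ne_top
  calc ‖fnApply a α‖ = ‖fnApply a α‖ₑ.toReal := (toReal_enorm _).symm
    _ ≤ (coefNorm G κ a * ∏ j, ENNReal.ofReal (lpNorm (p j) (α j) / κ j) ^ d j).toReal :=
        ENNReal.toReal_mono (ENNReal.mul_ne_top hfin.ne hC) <|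
          enorm_tsum_le_tsum_enorm.trans (tsum_enorm_coef_mul_prod_le hG1 hκ hα hdeg hp hsum)
    _ = _ := by
        rw [ENNReal.toReal_mul, ENNReal.toReal_prod]
        simp only [ENNReal.toReal_pow,
          ENNReal.toReal_ofReal (div_nonneg (lpNorm_nonneg _ _) (hκ _).le)]

/-- Young's inequality for analytic functions of fields (Lemma III.1(a)). -/
theorem statement0 {X : Type*} [Fintype X] [DecidableEq X] [Nonempty X] {s : ℕ}
    (G : Finset X → ℝ)
    (hG1 : ∀ S : Finset X, 1 ≤ G S)
    (hGsing : ∀ S : Finset X, S.card ≤ 1 → G S = 1)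
    (hGmono : ∀ S T : Finset X, S ⊆ T → G S ≤ G T)
    (hGmul : ∀ S T : Finset X, (S ∩ T).Nonempty → G (S ∪ T) ≤ G S * G T)
    (κ : Fin s → ℝ) (hκ : ∀ j, 0 < κ j)
    (d : Fin s → ℕ)
    (a : (Fin s → List X) → ℂ) (ha : IsSymm a)
    (hfin : coefNorm G κ a < ⊤)
    (hdeg : ∀ l : Fin s → List X, (∃ j, (l j).length < d j) → a l = 0)
    (p : Fin s → ℝ≥0∞) (hp : ∀ j, 0 < p j)
    (hsum : ∑ j, (d j : ℝ≥0∞) / p j = 1)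
    (α : Fin s → X → ℂ) (hα : ∀ j x, ‖α j x‖ ≤ κ j) :
    ‖fnApply a α‖
      ≤ (coefNorm G κ a).toReal * ∏ j, (lpNorm (p j) (α j) / κ j) ^ d j :=
  statement0_general G hG1 κ hκ d a hfin hdeg p hp hsum α hα

end BFKT
end

section
/- Let λ₁,…,λ_s > 0 be further constant weight factors and let σ ≥ 1. Let w_δ be the weight system (with the same G) for the 2s fields (α₁,…,α_s,δ₁,…,δ_s) assigning weight factor κ_j to α_j and λ_j to δ_j, and let w_σ be the weight system for the s fields (α₁,…,α_s) assigning weight factor κ_j + σλ_j to α_j. Let A be an s-field map with ⦀A⦀_{w_σ} < ∞ and symmetric kernel (for each x and j, A(x;x⃗₁,…,x⃗_s) invariant under permutations of the components of x⃗_j), and let δA be the 2s-field map with δA(α₁,…,α_s,δ₁,…,δ_s) = A(α₁+δ₁,…,α_s+δ_s) − A(α₁,…,α_s), whose kernel is δA(x; x⃗₁,…,x⃗_s; y⃗₁,…,y⃗_s) = χ(n(y⃗₁)+⋯+n(y⃗_s) ≥ 1) · A(x; x⃗₁∘y⃗₁,…,x⃗_s∘y⃗_s) · Π_{j=1}^s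 binom(n(x⃗_j)+n(y⃗_j), n(y⃗_j)). Then ⦀δA⦀_{w_δ} ≤ σ^{−1} ⦀A⦀_{w_σ}. -/
open scoped BigOperators ENNReal Classical

namespace BFKT

/-- The kernel of the `2s`-field map
`δA(α₁,…,α_s,δ₁,…,δ_s) = A(α₁+δ₁,…,α_s+δ_s) − A(α₁,…,α_s)`:
the first `s` slots are the `α`-arguments, the last `s` slots the `δ`-arguments. -/
def deltaKer {X : Type*} {s : ℕ} (A : X → (Fin s → List X) → ℂ) :
    X → (Fin (s + s) → List X) → ℂ :=
  fun x l =>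
    if 1 ≤ ∑ j : Fin s, (l (Fin.natAdd s j)).length then
      A x (fun j => l (Fin.castAdd s j) ++ l (Fin.natAdd s j)) *
        ∏ j : Fin s,
          (Nat.choose ((l (Fin.castAdd s j)).length + (l (Fin.natAdd s j)).length)
            ((l (Fin.natAdd s j)).length) : ℂ)
    else 0

/-!
Cut every `2s`-tuple of points into its `α`-blocks and `δ`-blocks and concatenate the `j`-th
blocks. This bijection identifies the part of `δA` of degree `N - m` in `α` and `m ≠ 0` in `δ`
with the degree-`N` part of `A`, at the cost of the factor
`∏ⱼ C(Nⱼ, mⱼ) κⱼ^(Nⱼ-mⱼ) λⱼ^mⱼ / ∏ⱼ (κⱼ + σλⱼ)^Nⱼ`, in the `L` and in the `R` part of the norm.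
By the binomial theorem these factors sum to `1` over all `m` when `λ` is replaced by `σλ`; since
every `m ≠ 0` carries at least one factor `σ`, their sum over `m ≠ 0` is at most `σ⁻¹`.
-/

section BinomialWeight

open Finset

variable {R : Type*} {s : ℕ}

def binomWeight [CommSemiring R] (a b : Fin s → R) (N m : Fin s → ℕ) : R :=
  ∏ j, ((N j).choose (m j) : R) * a j ^ (N j - m j) * b j ^ m j

theorem sum_binomWeight [CommSemiring R] (a b : Fin s → R) (N : Fin s → ℕ) :
    ∑ m ∈ Fintype.piFinset (fun j => range (N j + 1)), binomWeight a b N m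
      = ∏ j, (a j + b j) ^ N j := by
  simp only [binomWeight]
  rw [← prod_univ_sum (fun j => range (N j + 1))
    (fun j k => ((N j).choose k : R) * a j ^ (N j - k) * b j ^ k)]
  refine prod_congr rfl fun j _ => ?_
  rw [add_comm (a j), add_pow]
  exact sum_congr rfl fun k _ => by ring

theorem binomWeight_mul_right [CommSemiring R] (a b : Fin s → R) (c : R) (N m : Fin s → ℕ) :
    binomWeight a (fun j => c * b j) N m = c ^ (∑ j, m j) * binomWeight a b N m := by
  rw [binomWeight, binomWeight, ← prod_pow_eq_pow_sum, ← prod_mul_distrib]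
  exact prod_congr rfl fun j _ => by ring

theorem binomWeight_eq_zero_of_lt [CommSemiring R] (a b : Fin s → R) {N m : Fin s → ℕ}
    {j : Fin s} (h : N j < m j) : binomWeight a b N m = 0 :=
  prod_eq_zero (mem_univ j) (by simp [Nat.choose_eq_zero_of_lt h])

theorem binomWeight_nonneg {a b : Fin s → ℝ} (ha : ∀ j, 0 ≤ a j) (hb : ∀ j, 0 ≤ b j)
    (N m : Fin s → ℕ) : 0 ≤ binomWeight a b N m :=
  prod_nonneg fun j _ =>
    mul_nonneg (mul_nonneg (Nat.cast_nonneg _) (pow_nonneg (ha j) _)) (pow_nonneg (hb j) _)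

/-- Every term with `m ≠ 0` gains a factor `σ ^ |m| ≥ σ` when `b` is replaced by `σ b`. -/
theorem sum_binomWeight_filter_le {a b : Fin s → ℝ} (ha : ∀ j, 0 ≤ a j)
    (hb : ∀ j, 0 ≤ b j) {σ : ℝ} (hσ : 1 ≤ σ) (N : Fin s → ℕ) :
    ∑ m ∈ Fintype.piFinset (fun j => range (N j + 1)) with 1 ≤ ∑ j, m j, binomWeight a b N m
      ≤ σ⁻¹ * ∏ j, (a j + σ * b j) ^ N j := by
  have hσb : ∀ j, 0 ≤ σ * b j := fun j => mul_nonneg (by linarith) (hb j)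
  rw [le_inv_mul_iff₀ (by linarith), mul_sum, ← sum_binomWeight]
  calc ∑ m ∈ Fintype.piFinset (fun j => range (N j + 1)) with 1 ≤ ∑ j, m j,
        σ * binomWeight a b N m
      ≤ ∑ m ∈ Fintype.piFinset (fun j => range (N j + 1)) with 1 ≤ ∑ j, m j,
        binomWeight a (fun j => σ * b j) N m := by
        refine sum_le_sum fun m hm => ?_
        rw [binomWeight_mul_right]
        have hm0 : ∑ j, m j ≠ 0 := by have := (mem_filter.1 hm).2; omega
        exact mul_le_mul_of_nonneg_right (le_self_pow₀ hσ hm0) (binomWeight_nonneg ha hb N m)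
    _ ≤ _ := sum_le_sum_of_subset_of_nonneg (filter_subset _ _)
        fun m _ _ => binomWeight_nonneg ha hσb N m

end BinomialWeight

section DeltaKernel

variable {X : Type*} {s : ℕ}

/-- The factor relating the `(N - m, m)` part of `δA` to the degree-`N` part of `A`
weighted by `μ`. -/
noncomputable def deltaCoef (κ lam μ : Fin s → ℝ) (N m : Fin s → ℕ) : ℝ≥0∞ :=
  if 1 ≤ ∑ j, m j then ENNReal.ofReal (binomWeight κ lam N m / ∏ j, μ j ^ N j) else 0

theorem tsum_deltaCoef_le {κ lam : Fin s → ℝ} (hκ : ∀ j, 0 ≤ κ j)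
    (hlam : ∀ j, 0 ≤ lam j) {σ : ℝ} (hσ : 1 ≤ σ) (N : Fin s → ℕ) :
    ∑' m, deltaCoef κ lam (fun j => κ j + σ * lam j) N m ≤ ENNReal.ofReal σ⁻¹ := by
  set box := Fintype.piFinset fun j => Finset.range (N j + 1)
  have hbox : ∀ m ∉ box, deltaCoef κ lam (fun j => κ j + σ * lam j) N m = 0 := by
    intro m hm
    obtain ⟨j, hj⟩ : ∃ j, N j < m j := by
      simpa [box, Fintype.mem_piFinset, Nat.lt_succ_iff] using hm
    simp [deltaCoef, binomWeight_eq_zero_of_lt κ lam hj]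
  have hD : 0 ≤ ∏ j, (κ j + σ * lam j) ^ N j :=
    Finset.prod_nonneg fun j _ => pow_nonneg (by nlinarith [hκ j, hlam j]) _
  rw [tsum_eq_sum hbox]
  simp only [deltaCoef]
  rw [← Finset.sum_filter, ← ENNReal.ofReal_sum_of_nonneg
    fun m _ => div_nonneg (binomWeight_nonneg hκ hlam N m) hD, ← Finset.sum_div]
  exact ENNReal.ofReal_le_ofReal <| div_le_of_le_mul₀ hD (inv_nonneg.2 (by linarith))
    (sum_binomWeight_filter_le hκ hlam hσ N)

abbrev totalLen (ν : Fin (s + s) → ℕ) : Fin s → ℕ :=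
  fun j => ν (Fin.castAdd s j) + ν (Fin.natAdd s j)

abbrev deltaLen (ν : Fin (s + s) → ℕ) : Fin s → ℕ := fun j => ν (Fin.natAdd s j)

theorem injective_totalLen_deltaLen :
    Function.Injective fun ν : Fin (s + s) → ℕ => (totalLen ν, deltaLen ν) := by
  intro ν ν' h
  simp only [Prod.mk.injEq, funext_iff, totalLen, deltaLen] at h
  funext j
  induction j using Fin.addCases with
  | left j => have := h.1 j; have := h.2 j; omega
  | right j => exact h.2 j

def concatTupEquiv (ν : Fin (s + s) → ℕ) : Tup X ν ≃ Tup X (totalLen ν) where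
  toFun v j := Fin.append (v (Fin.castAdd s j)) (v (Fin.natAdd s j))
  invFun w := Fin.addCases (motive := fun j => Fin (ν j) → X)
    (fun j => w j ∘ Fin.castAdd _) (fun j => w j ∘ Fin.natAdd _)
  left_inv v := by
    funext j
    induction j using Fin.addCases with
    | left j => funext i; simp
    | right j => funext i; simp
  right_inv w := by
    funext j i
    induction i using Fin.addCases with
    | left i => simp
    | right i => simp

theorem toLists_concatTupEquiv (ν : Fin (s + s) → ℕ) (v : Tup X ν) (j : Fin s) :
    toLists (concatTupEquiv ν v) j = toLists v (Fin.castAdd s j) ++ toLists v (Fin.natAdd s j) :=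
  List.ofFn_fin_append _ _

theorem exists_concatTupEquiv_apply_eq (ν : Fin (s + s) → ℕ) (j : Fin (s + s))
    (i : Fin (ν j)) :
    ∃ (j₀ : Fin s) (i₀ : Fin (totalLen ν j₀)),
      ∀ v : Tup X ν, concatTupEquiv ν v j₀ i₀ = v j i := by
  induction j using Fin.addCases with
  | left j => exact ⟨j, Fin.castAdd _ i, fun v => Fin.append_left _ _ _⟩
  | right j => exact ⟨j, Fin.natAdd _ i, fun v => Fin.append_right _ _ _⟩

theorem mem_supp_toLists [DecidableEq X] {n : Fin s → ℕ} {v : Tup X n} {y : X} :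
    y ∈ supp (toLists v) ↔ ∃ j i, v j i = y := by
  simp [supp, toLists]

theorem supp_toLists_concatTupEquiv [DecidableEq X] (ν : Fin (s + s) → ℕ) (v : Tup X ν) :
    supp (toLists (concatTupEquiv ν v)) = supp (toLists v) := by
  ext y
  simp only [mem_supp_toLists]
  constructor
  · rintro ⟨j, i, rfl⟩
    induction i using Fin.addCases with
    | left i => exact ⟨_, i, (Fin.append_left _ _ _).symm⟩
    | right i => exact ⟨_, i, (Fin.append_right _ _ _).symm⟩
  · rintro ⟨j, i, rfl⟩
    obtain ⟨j₀, i₀, h⟩ := exists_concatTupEquiv_apply_eq ν j i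
    exact ⟨j₀, i₀, h v⟩

theorem deltaKer_toLists (A : X → (Fin s → List X) → ℂ) {ν : Fin (s + s) → ℕ} (x : X)
    (v : Tup X ν) :
    deltaKer A x (toLists v) = if 1 ≤ ∑ j, deltaLen ν j then
      A x (toLists (concatTupEquiv ν v)) * ∏ j, ((totalLen ν j).choose (deltaLen ν j) : ℂ)
    else 0 := by
  have hlen : ∀ j, (toLists v j).length = ν j := fun j => List.length_ofFn
  have hconcat : (fun j => toLists v (Fin.castAdd s j) ++ toLists v (Fin.natAdd s j))
      = toLists (concatTupEquiv ν v) := funext fun j => (toLists_concatTupEquiv ν v j).symm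
  simp only [deltaKer, hlen, hconcat]

section KernelNorm

variable [DecidableEq X]

noncomputable def kerTerm (G : Finset X → ℝ) (κ : Fin s → ℝ)
    (A : X → (Fin s → List X) → ℂ) {n : Fin s → ℕ} (x : X) (v : Tup X n) : ℝ≥0∞ :=
  ENNReal.ofReal (‖A x (toLists v)‖ * (∏ j, κ j ^ n j) * G (insert x (supp (toLists v))))

noncomputable def kerNormTerm [Fintype X] (G : Finset X → ℝ) (κ : Fin s → ℝ)
    (A : X → (Fin s → List X) → ℂ) (n : Fin s → ℕ) : ℝ≥0∞ :=
  if 1 ≤ ∑ j, n j then max (kerL G κ A n) (kerR G κ A n) else 0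

theorem kerL_eq_iSup_sum_kerTerm [Fintype X] (G : Finset X → ℝ) (κ : Fin s → ℝ)
    (A : X → (Fin s → List X) → ℂ) (n : Fin s → ℕ) :
    kerL G κ A n = ⨆ x, ∑ v : Tup X n, kerTerm G κ A x v :=
  rfl

theorem kerR_eq_iSup_sum_kerTerm [Fintype X] (G : Finset X → ℝ) (κ : Fin s → ℝ)
    (A : X → (Fin s → List X) → ℂ) (n : Fin s → ℕ) :
    kerR G κ A n = ⨆ (x' : X) (j : Fin s) (_ : n j ≠ 0) (i : Fin (n j)),
      ∑ x, ∑ v : Tup X n, if v j i = x' then kerTerm G κ A x v else 0 :=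
  rfl

theorem kerTerm_deltaKer (G : Finset X → ℝ) {κ lam μ : Fin s → ℝ}
    (hκ : ∀ j, 0 ≤ κ j) (hlam : ∀ j, 0 ≤ lam j) (hμ : ∀ j, 0 < μ j)
    (A : X → (Fin s → List X) → ℂ)
    {ν : Fin (s + s) → ℕ} (x : X) (v : Tup X ν) :
    kerTerm G (Fin.append κ lam) (deltaKer A) x v
      = deltaCoef κ lam μ (totalLen ν) (deltaLen ν) *
          kerTerm G μ A x (concatTupEquiv ν v) := by
  by_cases hm : 1 ≤ ∑ j, deltaLen ν j
  case neg => simp [kerTerm, deltaCoef, deltaKer_toLists, hm]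
  have hD : 0 < ∏ j, μ j ^ totalLen ν j := Finset.prod_pos fun j _ => pow_pos (hμ j) _
  have hweight : ∏ j, Fin.append κ lam j ^ ν j
      = ∏ j, κ j ^ (totalLen ν j - deltaLen ν j) * lam j ^ deltaLen ν j := by
    rw [Fin.prod_univ_add, Finset.prod_mul_distrib]
    simp only [Fin.append_left, Fin.append_right, Nat.add_sub_cancel]
  rw [kerTerm, kerTerm, deltaCoef, if_pos hm, ← ENNReal.ofReal_mul
    (div_nonneg (binomWeight_nonneg hκ hlam _ _) hD.le), deltaKer_toLists, if_pos hm,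
    supp_toLists_concatTupEquiv, hweight, norm_mul, norm_prod]
  congr 1
  simp only [Complex.norm_natCast, binomWeight, Finset.prod_mul_distrib]
  field_simp

theorem kerL_deltaKer_le (G : Finset X → ℝ) [Fintype X] {κ lam μ : Fin s → ℝ}
    (hκ : ∀ j, 0 ≤ κ j) (hlam : ∀ j, 0 ≤ lam j) (hμ : ∀ j, 0 < μ j)
    (A : X → (Fin s → List X) → ℂ) (ν : Fin (s + s) → ℕ) :
    kerL G (Fin.append κ lam) (deltaKer A) ν
      ≤ deltaCoef κ lam μ (totalLen ν) (deltaLen ν) * kerL G μ A (totalLen ν) := by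
  rw [kerL_eq_iSup_sum_kerTerm, kerL_eq_iSup_sum_kerTerm]
  refine iSup_le fun x => ?_
  calc ∑ v : Tup X ν, kerTerm G (Fin.append κ lam) (deltaKer A) x v
      = deltaCoef κ lam μ (totalLen ν) (deltaLen ν) * ∑ w, kerTerm G μ A x w := by
        simp only [kerTerm_deltaKer G hκ hlam hμ, ← Finset.mul_sum,
          Equiv.sum_comp (concatTupEquiv ν) (kerTerm G μ A x)]
    _ ≤ _ := mul_le_mul_right (le_iSup (fun x => ∑ w, kerTerm G μ A x w) x) _

theorem kerR_deltaKer_le (G : Finset X → ℝ) [Fintype X] {κ lam μ : Fin s → ℝ}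
    (hκ : ∀ j, 0 ≤ κ j) (hlam : ∀ j, 0 ≤ lam j) (hμ : ∀ j, 0 < μ j)
    (A : X → (Fin s → List X) → ℂ) (ν : Fin (s + s) → ℕ) :
    kerR G (Fin.append κ lam) (deltaKer A) ν
      ≤ deltaCoef κ lam μ (totalLen ν) (deltaLen ν) * kerR G μ A (totalLen ν) := by
  rw [kerR_eq_iSup_sum_kerTerm, kerR_eq_iSup_sum_kerTerm]
  refine iSup_le fun x' => iSup_le fun j => iSup_le fun _ => iSup_le fun i => ?_
  obtain ⟨j₀, i₀, hpos⟩ := exists_concatTupEquiv_apply_eq (X := X) ν j i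
  calc ∑ x, ∑ v : Tup X ν,
        (if v j i = x' then kerTerm G (Fin.append κ lam) (deltaKer A) x v else 0)
      = deltaCoef κ lam μ (totalLen ν) (deltaLen ν) *
          ∑ x, ∑ w : Tup X (totalLen ν),
            if w j₀ i₀ = x' then kerTerm G μ A x w else 0 := by
        simp only [Finset.mul_sum, mul_ite, mul_zero]
        refine Finset.sum_congr rfl fun x _ => ?_
        rw [← Equiv.sum_comp (concatTupEquiv ν)]
        simp only [hpos, kerTerm_deltaKer G hκ hlam hμ]
    _ ≤ _ := by
        gcongr
        refine le_iSup_of_le x' <| le_iSup_of_le j₀ <| le_iSup_of_le (Fin.pos i₀).ne' ?_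
        apply le_iSup_of_le i₀
        exact le_rfl

theorem kerNormTerm_deltaKer_le (G : Finset X → ℝ) [Fintype X] {κ lam μ : Fin s → ℝ}
    (hκ : ∀ j, 0 ≤ κ j) (hlam : ∀ j, 0 ≤ lam j) (hμ : ∀ j, 0 < μ j)
    (A : X → (Fin s → List X) → ℂ) (ν : Fin (s + s) → ℕ) :
    kerNormTerm G (Fin.append κ lam) (deltaKer A) ν
      ≤ deltaCoef κ lam μ (totalLen ν) (deltaLen ν) * kerNormTerm G μ A (totalLen ν) := by
  have hmax := max_le
    ((kerL_deltaKer_le G hκ hlam hμ A ν).trans (mul_le_mul_right (le_max_left _ _) _))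
    ((kerR_deltaKer_le G hκ hlam hμ A ν).trans (mul_le_mul_right (le_max_right _ _) _))
  calc kerNormTerm G (Fin.append κ lam) (deltaKer A) ν
      ≤ max (kerL G (Fin.append κ lam) (deltaKer A) ν)
          (kerR G (Fin.append κ lam) (deltaKer A) ν) := by
        unfold kerNormTerm; split_ifs; exacts [le_rfl, zero_le]
    _ ≤ _ := hmax
    _ = _ := by
        by_cases hm : 1 ≤ ∑ j, deltaLen ν j
        · rw [kerNormTerm, if_pos (hm.trans (Finset.sum_le_sum fun j _ => Nat.le_add_left _ _))]
        · simp [deltaCoef, hm]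

end KernelNorm

end DeltaKernel

theorem statement4_general {X : Type*} [Fintype X] [DecidableEq X] {s : ℕ}
    (G : Finset X → ℝ)
    (κ lam : Fin s → ℝ) (hκ : ∀ j, 0 < κ j) (hlam : ∀ j, 0 < lam j)
    (σ : ℝ) (hσ : 1 ≤ σ)
    (A : X → (Fin s → List X) → ℂ) :
    kerNorm G (Fin.append κ lam) (deltaKer A)
      ≤ ENNReal.ofReal σ⁻¹ * kerNorm G (fun j => κ j + σ * lam j) A := by
  set μ : Fin s → ℝ := fun j => κ j + σ * lam j
  have hμ : ∀ j, 0 < μ j := fun j => by nlinarith [hκ j, hlam j]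
  have hκ' : ∀ j, 0 ≤ κ j := fun j => (hκ j).le
  have hlam' : ∀ j, 0 ≤ lam j := fun j => (hlam j).le
  calc kerNorm G (Fin.append κ lam) (deltaKer A)
      ≤ ∑' ν, deltaCoef κ lam μ (totalLen ν) (deltaLen ν) *
          kerNormTerm G μ A (totalLen ν) :=
        ENNReal.tsum_le_tsum (kerNormTerm_deltaKer_le G hκ' hlam' hμ A)
    _ ≤ ∑' p : (Fin s → ℕ) × (Fin s → ℕ),
          deltaCoef κ lam μ p.1 p.2 * kerNormTerm G μ A p.1 :=
        ENNReal.tsum_comp_le_tsum_of_injective injective_totalLen_deltaLen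
          (fun p => deltaCoef κ lam μ p.1 p.2 * kerNormTerm G μ A p.1)
    _ = ∑' N, (∑' m, deltaCoef κ lam μ N m) * kerNormTerm G μ A N := by
        simp only [ENNReal.tsum_prod', ENNReal.tsum_mul_right]
    _ ≤ ∑' N, ENNReal.ofReal σ⁻¹ * kerNormTerm G μ A N :=
        ENNReal.tsum_le_tsum fun N => mul_le_mul_left (tsum_deltaCoef_le hκ' hlam' hσ N) _
    _ = ENNReal.ofReal σ⁻¹ * kerNorm G μ A := ENNReal.tsum_mul_left

/-- Lemma III.6(b): `⦀δA⦀_{w_δ} ≤ σ^{−1} ⦀A⦀_{w_σ}`. -/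
theorem statement4 {X : Type*} [Fintype X] [DecidableEq X] [Nonempty X] {s : ℕ}
    (G : Finset X → ℝ)
    (hG1 : ∀ S : Finset X, 1 ≤ G S)
    (hGsing : ∀ S : Finset X, S.card ≤ 1 → G S = 1)
    (hGmono : ∀ S T : Finset X, S ⊆ T → G S ≤ G T)
    (hGmul : ∀ S T : Finset X, (S ∩ T).Nonempty → G (S ∪ T) ≤ G S * G T)
    (κ lam : Fin s → ℝ) (hκ : ∀ j, 0 < κ j) (hlam : ∀ j, 0 < lam j)
    (σ : ℝ) (hσ : 1 ≤ σ)
    (A : X → (Fin s → List X) → ℂ) (hA : IsKernel A)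
    (hAsymm : ∀ x, IsSymm (A x))
    (hfin : kerNorm G (fun j => κ j + σ * lam j) A < ⊤) :
    kerNorm G (Fin.append κ lam) (deltaKer A)
      ≤ ENNReal.ofReal σ⁻¹ * kerNorm G (fun j => κ j + σ * lam j) A :=
  statement4_general G κ lam hκ hlam σ hσ A

end BFKT
end

section
/- Let n ≥ 1 and for each 1 ≤ ℓ ≤ n let (X_ℓ, μ_ℓ) be a σ-finite measure space, f_ℓ : X_ℓ → ℂ measurable, and p_ℓ ∈ (0,∞] with Σ_{ℓ=1}^n 1/p_ℓ = 1. Let K : X₁×⋯×X_n → ℂ be measurable with finite L¹–L^∞ norm ‖K‖_{L¹–L^∞} = max_{1≤ℓ≤n} ess sup_{x_ℓ∈X_ℓ} ∫ |K(x₁,…,x_n)| Π_{m≠ℓ} dμ_m(x_m). Then ∫_{X₁×⋯×X_n} |K(x₁,…,x_n)| Π_{ℓ=1}^n |f_ℓ(x_ℓ)| Π_{ℓ=1}^n dμ_ℓ(x_ℓ) ≤ ‖K‖_{L¹–L^∞} · Π_{ℓ=1}^n ‖f_ℓ‖_{L^{p_ℓ}(μ_ℓ)}; in particular |∫ K·Π_ℓ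 f_ℓ dμ₁⋯dμ_n| ≤ ‖K‖_{L¹–L^∞} · Π_{ℓ=1}^n ‖f_ℓ‖_{L^{p_ℓ}(μ_ℓ)}. -/
/-!
Weight the product measure by `|K|`: with `ν = |K| · ∏ μ_ℓ` the left-hand side is
`∫ ∏_ℓ |f_ℓ(z_ℓ)| dν`, which Hölder's inequality for `ν` bounds by
`∏_ℓ ‖f_ℓ ∘ π_ℓ‖_{L^{p_ℓ}(ν)}`. By Fubini the `ℓ`-th marginal of `ν` has density
`x ↦ ∫ |K(x, y)| dy` with respect to `μ_ℓ`, which is a.e. at most `‖K‖_{L¹–L^∞}`. Hence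
`‖f_ℓ ∘ π_ℓ‖_{L^{p_ℓ}(ν)} ≤ ‖K‖^{1/p_ℓ} ‖f_ℓ‖_{L^{p_ℓ}(μ_ℓ)}`, and the powers of `‖K‖` multiply
to `‖K‖` because `∑ 1/p_ℓ = 1`.
-/

open scoped BigOperators ENNReal
open MeasureTheory

/-- Reconstruct a point of the product from its `ℓ`-th coordinate and the remaining
coordinates. -/
def recomb {n : ℕ} {Xs : Fin n → Type*} (ℓ : Fin n) (x : Xs ℓ)
    (y : ∀ m : {m : Fin n // m ≠ ℓ}, Xs m.1) (m : Fin n) : Xs m :=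
  if h : m = ℓ then cast (congrArg Xs h).symm x else y ⟨m, h⟩

/-- The mixed `L¹`–`L^∞` norm of a kernel `K` on a product of measure spaces:
the max over `ℓ` of the essential sup over the `ℓ`-th variable of the integral of `|K|`
over all the other variables. -/
noncomputable def KnormL1Linf {n : ℕ} {Xs : Fin n → Type*}
    [∀ ℓ, MeasurableSpace (Xs ℓ)] (μ : ∀ ℓ, Measure (Xs ℓ))
    (K : (∀ ℓ, Xs ℓ) → ℂ) : ℝ≥0∞ :=
  ⨆ ℓ, essSup
    (fun x : Xs ℓ =>
      ∫⁻ y, ENNReal.ofReal ‖K (recomb ℓ x y)‖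
        ∂(Measure.pi fun m : {m : Fin n // m ≠ ℓ} => μ m.1))
    (μ ℓ)

namespace ENNReal

theorem prod_rpow_eq_rpow_sum {ι : Type*} (x : ℝ≥0∞) (s : Finset ι) {a : ι → ℝ}
    (ha : ∀ i ∈ s, 0 ≤ a i) : ∏ i ∈ s, x ^ a i = x ^ ∑ i ∈ s, a i := by
  induction s using Finset.cons_induction with
  | empty => simp
  | cons i s hi ih =>
    rw [Finset.prod_cons, Finset.sum_cons, ih fun j hj => ha j (Finset.mem_cons_of_mem hj),
      rpow_add_of_nonneg _ _ (ha i (Finset.mem_cons_self i s))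
        (Finset.sum_nonneg fun j hj => ha j (Finset.mem_cons_of_mem hj))]

theorem prod_rpow_toReal_one_div_eq_self {ι : Type*} (x : ℝ≥0∞) (s : Finset ι) {p : ι → ℝ≥0∞}
    (hp : ∑ i ∈ s, 1 / p i = 1) : ∏ i ∈ s, x ^ (1 / p i).toReal = x := by
  have hfin : ∀ i ∈ s, 1 / p i ≠ ⊤ := fun i hi =>
    (((Finset.single_le_sum (f := fun i => 1 / p i) (fun _ _ => zero_le) hi).trans
      hp.le).trans_lt one_lt_top).ne
  rw [prod_rpow_eq_rpow_sum _ _ fun _ _ => toReal_nonneg, ← toReal_sum hfin, hp, toReal_one,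
    rpow_one]

end ENNReal

namespace MeasureTheory

theorem eLpNorm_prod_le {ι α 𝕜 : Type*} [MeasurableSpace α] [NormedCommRing 𝕜] [NormOneClass 𝕜]
    {μ : Measure α} (s : Finset ι) {f : ι → α → 𝕜} (p : ι → ℝ≥0∞)
    (hf : ∀ i ∈ s, AEStronglyMeasurable (f i) μ) :
    eLpNorm (∏ i ∈ s, f i) (∑ i ∈ s, (p i)⁻¹)⁻¹ μ ≤ ∏ i ∈ s, eLpNorm (f i) (p i) μ := by
  induction s using Finset.cons_induction with
  | empty =>
    rcases eq_or_ne μ 0 with rfl | hμ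
    · simp
    · simp [Pi.one_def, eLpNormEssSup_const, hμ]
  | cons i s hi ih =>
    have hs : ∀ j ∈ s, AEStronglyMeasurable (f j) μ :=
      fun j hj => hf j (Finset.mem_cons_of_mem hj)
    rw [Finset.prod_cons, Finset.prod_cons]
    have : ENNReal.HolderTriple (p i) (∑ j ∈ s, (p j)⁻¹)⁻¹
        (∑ j ∈ Finset.cons i s hi, (p j)⁻¹)⁻¹ := ⟨by simp⟩
    calc eLpNorm (f i * ∏ j ∈ s, f j) _ μ
        ≤ 1 * eLpNorm (f i) (p i) μ * eLpNorm (∏ j ∈ s, f j) (∑ j ∈ s, (p j)⁻¹)⁻¹ μ :=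
          eLpNorm_le_eLpNorm_mul_eLpNorm_of_nnnorm (hf i (Finset.mem_cons_self i s))
            (Finset.aestronglyMeasurable_prod s hs) (· * ·) 1
            (.of_forall fun x => by simp [nnnorm_mul_le])
      _ ≤ eLpNorm (f i) (p i) μ * ∏ j ∈ s, eLpNorm (f j) (p j) μ := by
          rw [one_mul]; gcongr; exact ih hs

end MeasureTheory

section Slices

variable {n : ℕ} {Xs : Fin n → Type*}

@[simp]
theorem recomb_self (ℓ : Fin n) (x : Xs ℓ) (y : ∀ m : {m : Fin n // m ≠ ℓ}, Xs m.1) :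
    recomb ℓ x y ℓ = x := by
  simp [recomb]

variable [∀ ℓ, MeasurableSpace (Xs ℓ)]

noncomputable def MeasurableEquiv.piSplitAt (ℓ : Fin n) :
    (∀ m, Xs m) ≃ᵐ (Xs ℓ × ∀ m : {m : Fin n // m ≠ ℓ}, Xs m.1) :=
  (MeasurableEquiv.piEquivPiSubtypeProd Xs (· = ℓ)).trans
    ((MeasurableEquiv.piUnique fun m : {m : Fin n // m = ℓ} => Xs m.1).prodCongr
      (MeasurableEquiv.refl _))

theorem MeasurableEquiv.piSplitAt_symm_apply (ℓ : Fin n) (x : Xs ℓ)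
    (y : ∀ m : {m : Fin n // m ≠ ℓ}, Xs m.1) :
    (piSplitAt ℓ).symm (x, y) = recomb ℓ x y := by
  rw [MeasurableEquiv.symm_apply_eq]
  show (x, y) = (recomb ℓ x y ℓ, fun m : {m : Fin n // m ≠ ℓ} => recomb ℓ x y m.1)
  congr 1
  · simp
  · funext m; simp [recomb, m.2]

variable (μ : ∀ ℓ, Measure (Xs ℓ))

noncomputable def sliceLIntegral (K : (∀ m, Xs m) → ℂ) (ℓ : Fin n) (x : Xs ℓ) : ℝ≥0∞ :=
  ∫⁻ y, ‖K (recomb ℓ x y)‖ₑ ∂(Measure.pi fun m : {m : Fin n // m ≠ ℓ} => μ m.1)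

theorem essSup_sliceLIntegral_le_KnormL1Linf (K : (∀ m, Xs m) → ℂ) (ℓ : Fin n) :
    essSup (sliceLIntegral μ K ℓ) (μ ℓ) ≤ KnormL1Linf μ K := by
  simp only [KnormL1Linf, ofReal_norm]
  exact le_iSup (fun ℓ => essSup (sliceLIntegral μ K ℓ) (μ ℓ)) ℓ

variable [∀ ℓ, SigmaFinite (μ ℓ)]

theorem measurePreserving_piSplitAt (ℓ : Fin n) :
    MeasurePreserving (MeasurableEquiv.piSplitAt ℓ) (Measure.pi μ)
      ((μ ℓ).prod (Measure.pi fun m : {m : Fin n // m ≠ ℓ} => μ m.1)) := by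
  refine (measurePreserving_piEquivPiSubtypeProd μ (· = ℓ)).trans ?_
  convert (measurePreserving_piUnique fun m : {m : Fin n // m = ℓ} => μ m.1).prod
      (MeasurePreserving.id (Measure.pi fun m : {m : Fin n // m ≠ ℓ} => μ m.1)) using 2
  case e'_6 => congr 1; exact Subsingleton.elim _ _
  all_goals rfl

theorem lintegral_pi_eq_lintegral_lintegral_recomb (ℓ : Fin n) {G : (∀ m, Xs m) → ℝ≥0∞}
    (hG : Measurable G) :
    ∫⁻ z, G z ∂Measure.pi μ
      = ∫⁻ x, ∫⁻ y, G (recomb ℓ x y) ∂(Measure.pi fun m : {m : Fin n // m ≠ ℓ} => μ m.1) ∂μ ℓ := by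
  rw [← (measurePreserving_piSplitAt μ ℓ).symm.lintegral_comp hG,
    lintegral_prod (fun w => G ((MeasurableEquiv.piSplitAt ℓ).symm w))
      (hG.comp (MeasurableEquiv.piSplitAt ℓ).symm.measurable).aemeasurable]
  simp only [MeasurableEquiv.piSplitAt_symm_apply]

theorem map_eval_withDensity_enorm {K : (∀ m, Xs m) → ℂ} (hK : Measurable K) (ℓ : Fin n) :
    ((Measure.pi μ).withDensity fun z => ‖K z‖ₑ).map (Function.eval ℓ)
      = (μ ℓ).withDensity (sliceLIntegral μ K ℓ) := by
  ext A hA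
  have hA' : MeasurableSet (Function.eval ℓ ⁻¹' A) := measurable_pi_apply ℓ hA
  rw [Measure.map_apply (measurable_pi_apply ℓ) hA, withDensity_apply _ hA',
    withDensity_apply _ hA, ← lintegral_indicator hA', ← lintegral_indicator hA,
    lintegral_pi_eq_lintegral_lintegral_recomb μ ℓ (hK.enorm.indicator hA')]
  congr 1
  funext x
  by_cases hx : x ∈ A <;> simp [Set.indicator, hx, sliceLIntegral]

theorem map_eval_withDensity_enorm_le {K : (∀ m, Xs m) → ℂ} (hK : Measurable K) (ℓ : Fin n) :
    ((Measure.pi μ).withDensity fun z => ‖K z‖ₑ).map (Function.eval ℓ)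
      ≤ KnormL1Linf μ K • μ ℓ := by
  rw [map_eval_withDensity_enorm μ hK, ← withDensity_const]
  refine withDensity_mono ?_
  filter_upwards [ae_le_essSup (f := sliceLIntegral μ K ℓ) (μ := μ ℓ)] with x hx
  exact hx.trans (essSup_sliceLIntegral_le_KnormL1Linf μ K ℓ)

theorem eLpNorm_comp_eval_withDensity_le {E : Type*} [NormedAddCommGroup E]
    {K : (∀ m, Xs m) → ℂ} (hK : Measurable K) (ℓ : Fin n) {g : Xs ℓ → E}
    (hg : AEStronglyMeasurable g (μ ℓ)) (p : ℝ≥0∞) :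
    eLpNorm (fun z => g (z ℓ)) p ((Measure.pi μ).withDensity fun z => ‖K z‖ₑ)
      ≤ KnormL1Linf μ K ^ (1 / p).toReal * eLpNorm g p (μ ℓ) := by
  have hle := map_eval_withDensity_enorm_le μ hK ℓ
  have hg' : AEStronglyMeasurable g
      (((Measure.pi μ).withDensity fun z => ‖K z‖ₑ).map (Function.eval ℓ)) :=
    hg.mono_ac ((Measure.absolutelyContinuous_of_le hle).trans
      (Measure.smul_absolutelyContinuous))
  calc eLpNorm (fun z => g (z ℓ)) p ((Measure.pi μ).withDensity fun z => ‖K z‖ₑ)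
      = eLpNorm g p (((Measure.pi μ).withDensity fun z => ‖K z‖ₑ).map (Function.eval ℓ)) :=
        (eLpNorm_map_measure hg' (measurable_pi_apply ℓ).aemeasurable).symm
    _ ≤ eLpNorm g p (KnormL1Linf μ K • μ ℓ) := eLpNorm_mono_measure g hle
    _ ≤ KnormL1Linf μ K ^ (1 / p).toReal * eLpNorm g p (μ ℓ) := eLpNorm_smul_measure_le _ _ _ _

theorem lintegral_enorm_mul_prod_le_KnormL1Linf_mul_prod_eLpNorm
    (f : ∀ ℓ, Xs ℓ → ℂ) (hf : ∀ ℓ, Measurable (f ℓ)) {K : (∀ ℓ, Xs ℓ) → ℂ} (hK : Measurable K)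
    {p : Fin n → ℝ≥0∞} (hp : ∑ ℓ, 1 / p ℓ = 1) :
    ∫⁻ z, ‖K z‖ₑ * ∏ ℓ, ‖f ℓ (z ℓ)‖ₑ ∂Measure.pi μ
      ≤ KnormL1Linf μ K * ∏ ℓ, eLpNorm (f ℓ) (p ℓ) (μ ℓ) := by
  set ν := (Measure.pi μ).withDensity fun z => ‖K z‖ₑ
  set F : Fin n → (∀ ℓ, Xs ℓ) → ℂ := fun ℓ z => f ℓ (z ℓ)
  have hF : ∀ ℓ, Measurable (F ℓ) := fun ℓ => (hf ℓ).comp (measurable_pi_apply ℓ)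
  have hFprod : Measurable (∏ ℓ, F ℓ) :=
    Finset.prod_fn Finset.univ F ▸ Finset.measurable_prod _ fun ℓ _ => hF ℓ
  have hexp : (∑ ℓ, (p ℓ)⁻¹)⁻¹ = 1 := by simpa [one_div] using hp
  calc ∫⁻ z, ‖K z‖ₑ * ∏ ℓ, ‖f ℓ (z ℓ)‖ₑ ∂Measure.pi μ
      = eLpNorm (∏ ℓ, F ℓ) 1 ν := by
        rw [eLpNorm_one_eq_lintegral_enorm,
          lintegral_withDensity_eq_lintegral_mul _ hK.enorm hFprod.enorm]
        simp [F, Finset.prod_apply, nnnorm_prod, enorm]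
    _ ≤ ∏ ℓ, eLpNorm (F ℓ) (p ℓ) ν :=
        hexp ▸ eLpNorm_prod_le _ p fun ℓ _ => (hF ℓ).aestronglyMeasurable
    _ ≤ ∏ ℓ, KnormL1Linf μ K ^ (1 / p ℓ).toReal * eLpNorm (f ℓ) (p ℓ) (μ ℓ) :=
        Finset.prod_le_prod' fun ℓ _ => eLpNorm_comp_eval_withDensity_le μ hK ℓ
          (hf ℓ).aestronglyMeasurable (p ℓ)
    _ = KnormL1Linf μ K * ∏ ℓ, eLpNorm (f ℓ) (p ℓ) (μ ℓ) := by
        rw [Finset.prod_mul_distrib, ENNReal.prod_rpow_toReal_one_div_eq_self _ _ hp]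

end Slices

theorem statement17_general {n : ℕ} {Xs : Fin n → Type*}
    [∀ ℓ, MeasurableSpace (Xs ℓ)] (μ : ∀ ℓ, Measure (Xs ℓ))
    [∀ ℓ, SigmaFinite (μ ℓ)]
    (f : ∀ ℓ, Xs ℓ → ℂ) (hf : ∀ ℓ, Measurable (f ℓ))
    (K : (∀ ℓ, Xs ℓ) → ℂ) (hK : Measurable K)
    (p : Fin n → ℝ≥0∞)
    (hsum : ∑ ℓ, 1 / p ℓ = 1) :
    (∫⁻ z, ENNReal.ofReal ‖K z‖
          * ∏ ℓ, ENNReal.ofReal ‖f ℓ (z ℓ)‖ ∂(Measure.pi μ))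
        ≤ KnormL1Linf μ K * ∏ ℓ, eLpNorm (f ℓ) (p ℓ) (μ ℓ)
      ∧ ENNReal.ofReal ‖∫ z, K z * ∏ ℓ, f ℓ (z ℓ) ∂(Measure.pi μ)‖
        ≤ KnormL1Linf μ K * ∏ ℓ, eLpNorm (f ℓ) (p ℓ) (μ ℓ) := by
  have hbound := lintegral_enorm_mul_prod_le_KnormL1Linf_mul_prod_eLpNorm μ f hf hK hsum
  simp only [ofReal_norm]
  refine ⟨hbound, le_trans ?_ hbound⟩
  calc ‖∫ z, K z * ∏ ℓ, f ℓ (z ℓ) ∂Measure.pi μ‖ₑ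
      ≤ ∫⁻ z, ‖K z * ∏ ℓ, f ℓ (z ℓ)‖ₑ ∂Measure.pi μ := enorm_integral_le_lintegral_enorm _
    _ = ∫⁻ z, ‖K z‖ₑ * ∏ ℓ, ‖f ℓ (z ℓ)‖ₑ ∂Measure.pi μ := by simp [nnnorm_prod, enorm]

/-- Lemma III.A.1 (a generalisation of Young's inequality):
`∫ |K| Π_ℓ |f_ℓ| ≤ ‖K‖_{L¹–L^∞} Π_ℓ ‖f_ℓ‖_{L^{p_ℓ}}` when `Σ_ℓ 1/p_ℓ = 1`;
in particular `|∫ K Π_ℓ f_ℓ| ≤ ‖K‖_{L¹–L^∞} Π_ℓ ‖f_ℓ‖_{L^{p_ℓ}}`. -/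
theorem statement17 {n : ℕ} (hn : 1 ≤ n) {Xs : Fin n → Type*}
    [∀ ℓ, MeasurableSpace (Xs ℓ)] (μ : ∀ ℓ, Measure (Xs ℓ))
    [∀ ℓ, SigmaFinite (μ ℓ)]
    (f : ∀ ℓ, Xs ℓ → ℂ) (hf : ∀ ℓ, Measurable (f ℓ))
    (K : (∀ ℓ, Xs ℓ) → ℂ) (hK : Measurable K)
    (hKfin : KnormL1Linf μ K < ⊤)
    (p : Fin n → ℝ≥0∞) (hp : ∀ ℓ, 0 < p ℓ)
    (hsum : ∑ ℓ, 1 / p ℓ = 1) :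
    (∫⁻ z, ENNReal.ofReal ‖K z‖
          * ∏ ℓ, ENNReal.ofReal ‖f ℓ (z ℓ)‖ ∂(Measure.pi μ))
        ≤ KnormL1Linf μ K * ∏ ℓ, eLpNorm (f ℓ) (p ℓ) (μ ℓ)
      ∧ ENNReal.ofReal ‖∫ z, K z * ∏ ℓ, f ℓ (z ℓ) ∂(Measure.pi μ)‖
        ≤ KnormL1Linf μ K * ∏ ℓ, eLpNorm (f ℓ) (p ℓ) (μ ℓ) :=
  statement17_general μ f hf K hK p hsum
end
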